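/- Fix d ≥ 2 and let (t_e)_{e∈E^d} be i.i.d. nonnegative real random variables. If α > 0 is sufficiently large, then there exists a constant C > 0, depending only on α and d, such that for all n ≥ 1, P(there exists an α-bad contour of cardinality ≥ n) ≤ e^{−Cn}. -/

import Mathlib

open MeasureTheory ProbabilityTheory Filter Set
open scoped ENNReal NNReal

namespace FPPBoundary

/-- Vertices of `ℤ^d`. -/
abbrev V (d : ℕ) := Fin d → ℤ

/-- Nearest-neighbor adjacency in `ℤ^d`. -/
def adj {d : ℕ} (x y : V d) : Prop := (∑ i, |x i - y i|) = 1

/-- `e` is a nearest-neighbor edge of `ℤ^d`. -/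
def IsEdge {d : ℕ} (e : Sym2 (V d)) : Prop := ∃ x y : V d, adj x y ∧ e = s(x, y)

/-- The set of nearest-neighbor edges, as a type. -/
abbrev Edge (d : ℕ) := {e : Sym2 (V d) // IsEdge e}

/-- `γ : Fin (n+1) → V d` is a lattice path from `x` to `y`. -/
def IsPathFrom {d : ℕ} (n : ℕ) (γ : Fin (n + 1) → V d) (x y : V d) : Prop :=
  γ 0 = x ∧ γ (Fin.last n) = y ∧ ∀ i : Fin n, adj (γ i.castSucc) (γ i.succ)

/-- The passage time of a lattice path. -/
noncomputable def pathCost {d : ℕ} (wgt : Sym2 (V d) → ℝ) (n : ℕ)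
    (γ : Fin (n + 1) → V d) : ℝ :=
  ∑ i : Fin n, wgt s(γ i.castSucc, γ i.succ)

/-- The first-passage time `T(x,y)`. -/
noncomputable def T {d : ℕ} (wgt : Sym2 (V d) → ℝ) (x y : V d) : ℝ :=
  sInf {c : ℝ | ∃ n γ, IsPathFrom n γ x y ∧ c = pathCost wgt n γ}

/-- The lattice point `[x]` with `x ∈ [x] + [0,1)^d`. -/
noncomputable def latt {d : ℕ} (x : Fin d → ℝ) : V d := fun i => ⌊x i⌋

/-- The extension of `T` to `ℝ^d × ℝ^d`. -/
noncomputable def Treal {d : ℕ} (wgt : Sym2 (V d) → ℝ) (x y : Fin d → ℝ) : ℝ :=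
  T wgt (latt x) (latt y)

/-- The ball `B(t)`. -/
noncomputable def ball {d : ℕ} (wgt : Sym2 (V d) → ℝ) (t : ℝ) : Set (V d) :=
  {x | T wgt 0 x ≤ t}

/-- The edge boundary `∂ₑ A`. -/
def edgeBoundary {d : ℕ} (A : Set (V d)) : Set (Sym2 (V d)) :=
  {e | ∃ x y : V d, adj x y ∧ x ∈ A ∧ y ∉ A ∧ e = s(x, y)}

/-- The vertex exterior boundary `∂^ext A`. -/
def extVertexBoundary {d : ℕ} (A : Set (V d)) : Set (V d) :=
  {x | x ∉ A ∧ (∃ y ∈ A, adj x y) ∧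
    ∃ γ : ℕ → V d, γ 0 = x ∧ Function.Injective γ ∧
      (∀ n, adj (γ n) (γ (n + 1))) ∧ ∀ n, γ n ∉ A}

/-- The edge exterior boundary `∂ₑ^ext A`. -/
def extEdgeBoundary {d : ℕ} (A : Set (V d)) : Set (Sym2 (V d)) :=
  {e | ∃ x y : V d, adj x y ∧ y ∈ A ∧ x ∈ extVertexBoundary A ∧ e = s(x, y)}

/-- `x` and `y` are joined by a lattice path all of whose edges lie in `O`. -/
def ConnectedIn {d : ℕ} (O : Set (Sym2 (V d))) (x y : V d) : Prop :=
  ∃ n γ, IsPathFrom n γ x y ∧ ∀ i : Fin n, s(γ (Fin.castSucc i), γ i.succ) ∈ O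

/-- The open cluster of `x` for the set `O` of open edges. -/
def cluster {d : ℕ} (O : Set (Sym2 (V d))) (x : V d) : Set (V d) := {y | ConnectedIn O x y}

/-- `c` is an i.i.d. Bernoulli(p) bond configuration under `P`. -/
def IsBernoulliPerc {d : ℕ} {Ω : Type} [MeasurableSpace Ω] (P : Measure Ω) (p : ℝ)
    (c : Ω → Sym2 (V d) → Bool) : Prop :=
  (∀ e : Edge d, Measurable fun ω => c ω e.1) ∧
  iIndepFun (fun (e : Edge d) ω => c ω e.1) P ∧
  ∀ e : Edge d, P {ω | c ω e.1 = true} = ENNReal.ofReal p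

/-- The critical probability of Bernoulli bond percolation on `ℤ^d`. -/
noncomputable def pc (d : ℕ) : ℝ :=
  sSup {p : ℝ | 0 ≤ p ∧ p ≤ 1 ∧
    ∀ (Ω : Type) (_ : MeasurableSpace Ω) (P : Measure Ω), IsProbabilityMeasure P →
      ∀ c : Ω → Sym2 (V d) → Bool, IsBernoulliPerc P p c →
        P {ω | (cluster {e | c ω e = true} 0).Infinite} = 0}

/-- `w` is an i.i.d. family of nonnegative edge-weights with marginal distribution `μ`. -/
def IsIIDWeights {d : ℕ} {Ω : Type} [MeasurableSpace Ω] (P : Measure Ω) (μ : Measure ℝ)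
    (w : Ω → Sym2 (V d) → ℝ) : Prop :=
  (∀ e : Edge d, Measurable fun ω => w ω e.1) ∧
  iIndepFun (fun (e : Edge d) ω => w ω e.1) P ∧
  (∀ e : Edge d, Measure.map (fun ω => w ω e.1) P = μ) ∧
  ∀ (ω) (e : Edge d), 0 ≤ w ω e.1

/-- `Y`: the minimum of the weights of the `2d` edges incident to the origin. -/
noncomputable def Ymin {d : ℕ} (wgt : Sym2 (V d) → ℝ) : ℝ :=
  ⨅ z : {z : V d // adj 0 z}, wgt s(0, z.1)

/-- `E[Y ∧ s]`. -/
noncomputable def EYmin {d : ℕ} {Ω : Type} [MeasurableSpace Ω] (P : Measure Ω)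
    (w : Ω → Sym2 (V d) → ℝ) (s : ℝ) : ℝ :=
  ∫ ω, min (Ymin (w ω)) s ∂P

/-- the distribution function `F_Y` of `Y`. -/
noncomputable def FY {d : ℕ} {Ω : Type} [MeasurableSpace Ω] (P : Measure Ω)
    (w : Ω → Sym2 (V d) → ℝ) (s : ℝ) : ℝ :=
  (P {ω | Ymin (w ω) ≤ s}).toReal

/-- the first coordinate vector. -/
def e1 (d : ℕ) : V d := fun j => if (j : ℕ) = 0 then 1 else 0

/-- `ℓ^∞` norm of a lattice point, as a real number. -/
def linf {d : ℕ} (x : V d) : ℝ := ((Finset.univ.sup fun i => (x i).natAbs : ℕ) : ℝ)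

/-- `ℓ^2` norm on `ℝ^d`. -/
noncomputable def l2 {d : ℕ} (x : Fin d → ℝ) : ℝ := Real.sqrt (∑ i, x i ^ 2)

end FPPBoundary
namespace FPPBoundary

/-- `W` is *-connected. -/
def starConn {d : ℕ} (W : Finset (V d)) : Prop :=
  ∀ u ∈ W, ∀ v ∈ W, ∃ (k : ℕ) (γ : Fin (k + 1) → V d),
    γ 0 = u ∧ γ (Fin.last k) = v ∧ (∀ i, γ i ∈ W) ∧
    ∀ i : Fin k, (Finset.univ.sup fun j => ((γ i.castSucc - γ i.succ) j).natAbs) ≤ 1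

/-- `W` encloses `0`: every infinite vertex-self-avoiding lattice path starting at `0`
meets `W`. -/
def encloses0 {d : ℕ} (W : Finset (V d)) : Prop :=
  ∀ γ : ℕ → V d, γ 0 = 0 → Function.Injective γ →
    (∀ n, adj (γ n) (γ (n + 1))) → ∃ n, γ n ∈ W

/-- `W` is an `α`-bad contour for the weights `wgt`. -/
def badContour {d : ℕ} (α : ℝ) (wgt : Sym2 (V d) → ℝ) (W : Finset (V d)) : Prop :=
  starConn W ∧ encloses0 W ∧
    (W.card : ℝ) ≤ 2 * ({v ∈ (W : Set (V d)) | ∃ u, adj v u ∧ α < wgt s(v, u)}.ncard : ℝ)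

end FPPBoundary

/-!
A Peierls argument. A `*`-connected set `W` enclosing `0` meets the positive first axis at
some `k • e₁` with `k < #W`: the projection of `W` on the first axis is an interval containing
`k` and a point `≤ 0`. From there a walk of `2 (#W - 1)` `*`-steps visits all of `W`, so there
are at most `#W · 9^(d (#W - 1))` candidates of size `#W`. If `W` is `α`-bad, at least `#W / 2`
of its vertices have a heavy incident edge, and greedily `#W / (2 · 3^d)` of these can be chosen
pairwise not `*`-adjacent; their heavy edges are then distinct, hence independent. With
`3^d P(t_e > α) ≤ η^(2 · 3^d)`, a union bound over candidates and such subsets bounds the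
probability of a bad contour of size `m` by `(4 · 9^d · η)^m`, which sums over `m ≥ n` to
`e^(-n)` for a suitable `η`.
-/

namespace Relation.ReflTransGen

variable {α : Type*} {r : α → α → Prop} {a b : α}

theorem exists_rel_mem_not_mem {s : Set α} (h : ReflTransGen r a b) (ha : a ∈ s)
    (hb : b ∉ s) : ∃ x ∈ s, ∃ y ∉ s, r x y := by
  induction h with
  | refl => exact absurd ha hb
  | @tail c _ _ hcb ih =>
    by_cases hc : c ∈ s
    · exact ⟨c, hc, _, hb, hcb⟩
    · exact ih hc

theorem exists_eq_of_le_add_one {f : α → ℤ} (hf : ∀ x y, r x y → f y ≤ f x + 1)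
    (h : ReflTransGen r a b) {c : ℤ} (hac : f a ≤ c) (hcb : c ≤ f b) :
    ∃ x, ReflTransGen r a x ∧ f x = c := by
  induction h with
  | refl => exact ⟨a, .refl, le_antisymm hac hcb⟩
  | @tail x y hax hxy ih =>
    by_cases hc : c ≤ f x
    · exact ih hc
    · exact ⟨y, hax.tail hxy, by linarith [hf x y hxy]⟩

theorem mem_of_rel_mem {s : Set α} (h : ReflTransGen (fun x y => y ∈ s ∧ r x y) a b)
    (ha : a ∈ s) : b ∈ s := by
  rcases h.cases_tail with rfl | ⟨c, -, hb, -⟩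
  exacts [ha, hb]

theorem of_fin_chain {k : ℕ} (γ : Fin (k + 1) → α)
    (h : ∀ i : Fin k, r (γ i.castSucc) (γ i.succ)) : ReflTransGen r (γ 0) (γ (Fin.last k)) :=
  Fin.induction (motive := fun i => ReflTransGen r (γ 0) (γ i)) .refl
    (fun i ih => ih.tail (h i)) _

end Relation.ReflTransGen

theorem List.exists_isChain_toFinset_eq {α : Type*} [DecidableEq α] {R : α → α → Prop}
    [Std.Symm R] {W : Finset α} {r : α} (hr : r ∈ W)
    (hW : ∀ v ∈ W, Relation.ReflTransGen (fun x y => y ∈ W ∧ R x y) r v) :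
    ∃ l : List α, l.head? = some r ∧ l.IsChain R ∧ l.length = 2 * W.card - 1 ∧
      l.toFinset = W := by
  let Covered (S : Finset α) : Prop := ∃ l : List α, l.head? = some r ∧ l.IsChain R ∧
    l.length = 2 * S.card - 1 ∧ l.toFinset = S
  -- Grow the covered set one vertex `y` at a time, splicing a detour `x, y, x` into the walk.
  suffices ∀ k, ∀ S ⊆ W, (W \ S).card = k → Covered S → Covered W from
    this _ {r} (Finset.singleton_subset_iff.2 hr) rfl ⟨[r], rfl, .singleton _, by simp, by simp⟩
  intro k
  induction k with
  | zero =>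
    intro S hSW hk hS
    rw [Finset.card_eq_zero, Finset.sdiff_eq_empty_iff_subset] at hk
    rwa [← hSW.antisymm hk]
  | succ k ih =>
    rintro S hSW hk ⟨l, hhead, hchain, hlen, rfl⟩
    obtain ⟨v, hv⟩ : (W \ l.toFinset).Nonempty := Finset.card_pos.1 (by omega)
    have hrS : r ∈ l.toFinset := List.mem_toFinset.2 (List.mem_of_mem_head? hhead)
    obtain ⟨x, hx, y, hy, hyW, hxy⟩ :=
      (hW v (Finset.mem_sdiff.1 hv).1).exists_rel_mem_not_mem (s := l.toFinset) hrS
        (Finset.mem_sdiff.1 hv).2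
    obtain ⟨l₁, l₂, rfl⟩ := List.append_of_mem (List.mem_toFinset.1 hx)
    refine ih (insert y (l₁ ++ x :: l₂).toFinset) (Finset.insert_subset hyW hSW) ?_
      ⟨l₁ ++ x :: y :: x :: l₂, ?_, ?_, ?_, ?_⟩
    · rw [Finset.sdiff_insert, Finset.card_erase_of_mem (Finset.mem_sdiff.2 ⟨hyW, hy⟩), hk]
      rfl
    · cases l₁ <;> simp_all
    · rw [List.isChain_split] at hchain ⊢
      simp [hchain, hxy, symm hxy]
    · have : 1 ≤ (l₁ ++ x :: l₂).toFinset.card := Finset.card_pos.2 ⟨x, hx⟩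
      rw [Finset.card_insert_of_notMem hy]
      simp only [List.length_append, List.length_cons] at hlen ⊢
      omega
    · ext z
      simp [or_comm, or_left_comm]

section StepWalks

variable {α : Type*} [AddCommGroup α] {D : Finset α} {r : α}

theorem List.IsChain.exists_scanl_eq {l : List α} (hl : l.IsChain fun x y => y - x ∈ D)
    (hr : l.head? = some r) :
    ∃ δ : List α, (∀ x ∈ δ, x ∈ D) ∧ δ.length + 1 = l.length ∧ δ.scanl (· + ·) r = l := by
  induction l generalizing r with
  | nil => simp at hr
  | cons a t ih =>
    obtain rfl : a = r := by simpa using hr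
    cases t with
    | nil => exact ⟨[], by simp⟩
    | cons b t =>
      rw [List.isChain_cons_cons] at hl
      obtain ⟨δ, hδ, hlen, hscan⟩ := ih hl.2 rfl
      refine ⟨(b - a) :: δ, ?_, by simp [hlen], ?_⟩
      · simpa [hl.1] using hδ
      · simp [hscan]

variable [DecidableEq α]

def walkFinsets (D : Finset α) (r : α) (L : ℕ) : Finset (Finset α) :=
  (Finset.univ : Finset (Fin L → D)).image fun c =>
    ((List.ofFn fun i => (c i : α)).scanl (· + ·) r).toFinset

theorem card_walkFinsets_le (L : ℕ) : (walkFinsets D r L).card ≤ D.card ^ L :=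
  Finset.card_image_le.trans (by simp)

theorem scanl_toFinset_mem_walkFinsets {δ : List α} (hδ : ∀ x ∈ δ, x ∈ D) :
    (δ.scanl (· + ·) r).toFinset ∈ walkFinsets D r δ.length :=
  Finset.mem_image.2 ⟨fun i => ⟨δ[(i : ℕ)], hδ _ (List.getElem_mem _)⟩, Finset.mem_univ _, by
    simp only [List.ofFn_getElem]⟩

theorem mem_walkFinsets_of_reflTransGen (hD : ∀ x ∈ D, -x ∈ D) {W : Finset α} (hr : r ∈ W)
    (hW : ∀ v ∈ W, Relation.ReflTransGen (fun x y => y ∈ W ∧ y - x ∈ D) r v) :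
    W ∈ walkFinsets D r (2 * (W.card - 1)) := by
  have : Std.Symm fun x y : α => y - x ∈ D := ⟨fun x y h => by simpa using hD _ h⟩
  obtain ⟨l, hhead, hchain, hlen, rfl⟩ := List.exists_isChain_toFinset_eq hr hW
  obtain ⟨δ, hδ, hδlen, rfl⟩ := hchain.exists_scanl_eq hhead
  convert scanl_toFinset_mem_walkFinsets hδ using 2
  omega

end StepWalks

theorem Finset.exists_subset_pairwise_not_rel_card_le {α : Type*} [DecidableEq α]
    {R : α → α → Prop} [DecidableRel R] [Std.Symm R] [Std.Refl R] {K : ℕ} (T : Finset α)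
    (hK : ∀ t ∈ T, (T.filter (R t)).card ≤ K) :
    ∃ S ⊆ T, (S : Set α).Pairwise (fun a b => ¬ R a b) ∧ T.card ≤ K * S.card := by
  induction T using Finset.strongInduction with
  | H T ih =>
  obtain rfl | ⟨t, ht⟩ := T.eq_empty_or_nonempty
  · exact ⟨∅, by simp⟩
  set T' := T.filter (¬ R t ·)
  have hK' : ∀ u ∈ T', (T'.filter (R u)).card ≤ K := fun u hu =>
    (Finset.card_le_card (Finset.filter_subset_filter _ (Finset.filter_subset _ _))).trans
      (hK u (Finset.mem_of_mem_filter u hu))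
  obtain ⟨S, hST', hS, hcard⟩ :=
    ih T' (Finset.filter_ssubset.2 ⟨t, ht, by simp [refl_of R t]⟩) hK'
  have hfar : ∀ s ∈ S, ¬ R t s := fun s hs => (Finset.mem_filter.1 (hST' hs)).2
  have htS : t ∉ S := fun h => hfar t h (refl_of R t)
  refine ⟨insert t S, Finset.insert_subset ht (hST'.trans (Finset.filter_subset _ _)), ?_, ?_⟩
  · rw [Finset.coe_insert, Set.pairwise_insert]
    exact ⟨hS, fun s hs _ => ⟨hfar s hs, fun h => hfar s hs (symm h)⟩⟩
  · have hsplit : (T.filter (R t)).card + T'.card = T.card :=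
      Finset.card_filter_add_card_filter_not _
    rw [Finset.card_insert_of_notMem htS, mul_add_one]
    linarith [hK t ht]

open scoped Topology in
theorem MeasureTheory.tendsto_measure_Ioi_atTop (μ : Measure ℝ) [IsFiniteMeasure μ] :
    Tendsto (fun x => μ (Ioi x)) atTop (𝓝 0) := by
  have hempty : ⋂ x : ℝ, Ioi x = ∅ := iInter_eq_empty_iff.2 fun x => ⟨x, lt_irrefl x⟩
  have := tendsto_measure_iInter_atTop (μ := μ) (fun x : ℝ => measurableSet_Ioi.nullMeasurableSet)
    (fun _ _ h => Ioi_subset_Ioi h) ⟨0, measure_ne_top μ _⟩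
  rwa [hempty, measure_empty] at this

theorem MeasureTheory.exists_forall_ge_mul_measure_Ioi_le (μ : Measure ℝ) [IsFiniteMeasure μ]
    {c ε : ℝ≥0∞} (hc : c ≠ ⊤) (hε : 0 < ε) : ∃ x₀, ∀ x ≥ x₀, c * μ (Ioi x) ≤ ε := by
  have := ENNReal.Tendsto.const_mul (tendsto_measure_Ioi_atTop μ) (.inr hc)
  rw [mul_zero] at this
  exact eventually_atTop.1 (this.eventually (ge_mem_nhds hε))

theorem ENNReal.tsum_nat_add_le_ofReal_exp_neg {f : ℕ → ℝ≥0∞}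
    (hf : ∀ m, f m ≤ (2⁻¹ * ENNReal.ofReal (Real.exp (-1))) ^ m) {n : ℕ} (hn : 1 ≤ n) :
    ∑' j, f (n + j) ≤ ENNReal.ofReal (Real.exp (-n)) := by
  set q := ENNReal.ofReal (Real.exp (-1))
  have hq : q ≤ 1 := ENNReal.ofReal_le_one.2 (Real.exp_le_one_iff.2 (by norm_num))
  have hgeom : (1 - 2⁻¹ * q)⁻¹ ≤ 2 := by
    rw [ENNReal.inv_le_iff_inv_le]
    refine ENNReal.le_sub_of_add_le_left (ENNReal.mul_ne_top (by simp) ENNReal.ofReal_ne_top) ?_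
    calc 2⁻¹ * q + 2⁻¹ ≤ 2⁻¹ * 1 + 2⁻¹ := by gcongr
      _ = 1 := by rw [mul_one, ENNReal.inv_two_add_inv_two]
  obtain ⟨k, rfl⟩ : ∃ k, n = k + 1 := ⟨n - 1, by omega⟩
  calc ∑' j, f (k + 1 + j) ≤ ∑' j, (2⁻¹ * q) ^ (k + 1 + j) := ENNReal.tsum_le_tsum fun j => hf _
    _ = (2⁻¹ * q) ^ (k + 1) * (1 - 2⁻¹ * q)⁻¹ := by
        simp_rw [pow_add _ (k + 1), ENNReal.tsum_mul_left, ENNReal.tsum_geometric]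
    _ ≤ (2⁻¹ * q) ^ (k + 1) * 2 := by gcongr
    _ = 2⁻¹ ^ k * q ^ (k + 1) * (2⁻¹ * 2) := by ring
    _ = 2⁻¹ ^ k * q ^ (k + 1) := by rw [ENNReal.inv_mul_cancel (by simp) (by simp), mul_one]
    _ ≤ q ^ (k + 1) := mul_le_of_le_one_left' (pow_le_one₀ (by simp) (by simp))
    _ = ENNReal.ofReal (Real.exp (-(k + 1 : ℕ))) := by
        rw [← ENNReal.ofReal_pow (Real.exp_nonneg _), ← Real.exp_nat_mul]
        push_cast
        ring_nf

namespace FPPBoundary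

section

open Relation

variable {d : ℕ}

noncomputable def starNbhd (d : ℕ) : Finset (V d) := Fintype.piFinset fun _ => Finset.Icc (-1 : ℤ) 1

theorem card_starNbhd : (starNbhd d).card = 3 ^ d := by
  simp [starNbhd]

theorem mem_starNbhd {x : V d} : x ∈ starNbhd d ↔ ∀ j, |x j| ≤ 1 := by
  simp [starNbhd, abs_le]

theorem neg_mem_starNbhd {x : V d} (hx : x ∈ starNbhd d) : -x ∈ starNbhd d := by
  simpa [mem_starNbhd] using hx

theorem sup_natAbs_le_one_iff {x : V d} :
    (Finset.univ.sup fun j => (x j).natAbs) ≤ 1 ↔ x ∈ starNbhd d := by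
  simp only [Finset.sup_le_iff, Finset.mem_univ, true_imp_iff, mem_starNbhd]
  exact forall_congr' fun j => by rw [abs_le]; omega

theorem sub_mem_starNbhd_of_adj {x y : V d} (h : adj x y) : y - x ∈ starNbhd d :=
  mem_starNbhd.2 fun j => by
    rw [Pi.sub_apply, abs_sub_comm, ← h]
    exact Finset.single_le_sum (f := fun i => |x i - y i|) (fun i _ => abs_nonneg _)
      (Finset.mem_univ j)

theorem starConn.reflTransGen {W : Finset (V d)} (hW : starConn W) {u v : V d} (hu : u ∈ W)
    (hv : v ∈ W) : ReflTransGen (fun x y => y ∈ W ∧ y - x ∈ starNbhd d) u v := by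
  obtain ⟨k, γ, rfl, rfl, hγW, hγ⟩ := hW u hu v hv
  refine Relation.ReflTransGen.of_fin_chain γ fun i => ⟨hγW _, ?_⟩
  simpa using neg_mem_starNbhd (sup_natAbs_le_one_iff.1 (hγ i))

theorem sum_abs_e1 (hd : 1 ≤ d) : ∑ j, |e1 d j| = 1 := by
  obtain ⟨d, rfl⟩ : ∃ d', d = d' + 1 := ⟨d - 1, by omega⟩
  simp [e1, apply_ite, Fin.val_eq_zero_iff]

theorem adj_smul_e1 (hd : 1 ≤ d) {a b : ℤ} (hab : |a - b| = 1) : adj (a • e1 d) (b • e1 d) := by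
  simp only [adj, Pi.smul_apply, smul_eq_mul, ← sub_mul, abs_mul, ← Finset.mul_sum,
    sum_abs_e1 hd, hab, mul_one]

theorem smul_e1_apply_zero (hd : 1 ≤ d) (a : ℤ) : (a • e1 d) ⟨0, hd⟩ = a := by
  simp [e1]

theorem encloses0.exists_smul_e1_mem {W : Finset (V d)} (h0 : encloses0 W) (hd : 1 ≤ d) {s : ℤ}
    (hs : |s| = 1) : ∃ n : ℕ, (s * n) • e1 d ∈ W := by
  have hs0 : s ≠ 0 := by rintro rfl; simp at hs
  refine h0 (fun n => (s * n) • e1 d) (by simp) (fun a b hab => ?_) fun n => adj_smul_e1 hd ?_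
  · simpa [smul_e1_apply_zero hd, hs0] using congrArg (· ⟨0, hd⟩) hab
  · rw [show s * n - s * ↑(n + 1) = -s by push_cast; ring, abs_neg, hs]

theorem exists_natCast_smul_e1_mem (hd : 1 ≤ d) {W : Finset (V d)} (hW : starConn W)
    (h0 : encloses0 W) : ∃ k : ℕ, k < W.card ∧ (k : ℤ) • e1 d ∈ W := by
  obtain ⟨k, hk⟩ := h0.exists_smul_e1_mem hd (s := 1) (by simp)
  obtain ⟨n, hn⟩ := h0.exists_smul_e1_mem hd (s := -1) (by simp)
  rw [one_mul] at hk
  refine ⟨k, ?_, hk⟩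
  let f : V d → ℤ := fun x => x ⟨0, hd⟩
  have hf (a : ℤ) : f (a • e1 d) = a := smul_e1_apply_zero hd a
  have hstep : ∀ x y : V d, y ∈ W ∧ y - x ∈ starNbhd d → f y ≤ f x + 1 := fun x y h => by
    have := abs_le.1 (mem_starNbhd.1 h.2 ⟨0, hd⟩)
    simp only [Pi.sub_apply] at this
    simp only [f]
    omega
  have hIcc : Finset.Icc 0 (k : ℤ) ⊆ W.image f := by
    intro c hc
    rw [Finset.mem_Icc] at hc
    obtain ⟨x, hx, rfl⟩ := (hW.reflTransGen hn hk).exists_eq_of_le_add_one hstep (c := c)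
      (by rw [hf]; omega) (by rw [hf]; omega)
    exact Finset.mem_image_of_mem f (hx.mem_of_rel_mem hn)
  have := (Finset.card_le_card hIcc).trans Finset.card_image_le
  simp only [Int.card_Icc, sub_zero] at this
  omega

noncomputable def contourCandidates (d m : ℕ) : Finset (Finset (V d)) :=
  ((Finset.range m).biUnion fun k => walkFinsets (starNbhd d) ((k : ℤ) • e1 d) (2 * (m - 1))).filter
    (·.card = m)

theorem card_contourCandidates_le (d m : ℕ) :
    (contourCandidates d m).card ≤ (2 * 9 ^ d) ^ m := by
  have h9 : (3 ^ d) ^ 2 = 9 ^ d := by rw [← pow_mul, mul_comm, pow_mul]; norm_num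
  calc (contourCandidates d m).card
      ≤ ∑ k ∈ Finset.range m, (walkFinsets (starNbhd d) ((k : ℤ) • e1 d) (2 * (m - 1))).card :=
        (Finset.card_filter_le _ _).trans Finset.card_biUnion_le
    _ ≤ m * (9 ^ d) ^ (m - 1) := by
        simpa [card_starNbhd, pow_mul, h9] using Finset.sum_le_card_nsmul (Finset.range m) _ _
          fun k _ => card_walkFinsets_le (D := starNbhd d) (r := (k : ℤ) • e1 d) (2 * (m - 1))
    _ ≤ 2 ^ m * (9 ^ d) ^ m :=
        Nat.mul_le_mul Nat.lt_two_pow_self.le (Nat.pow_le_pow_right (by positivity) (by omega))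
    _ = (2 * 9 ^ d) ^ m := (mul_pow _ _ _).symm

theorem mem_contourCandidates (hd : 1 ≤ d) {W : Finset (V d)} (hW : starConn W)
    (h0 : encloses0 W) : W ∈ contourCandidates d W.card := by
  obtain ⟨k, hk, hkW⟩ := exists_natCast_smul_e1_mem hd hW h0
  exact Finset.mem_filter.2 ⟨Finset.mem_biUnion.2 ⟨k, Finset.mem_range.2 hk,
    mem_walkFinsets_of_reflTransGen (fun _ => neg_mem_starNbhd) hkW
      fun v hv => hW.reflTransGen hkW hv⟩, rfl⟩

def HasHeavyEdge (α : ℝ) (wgt : Sym2 (V d) → ℝ) (v : V d) : Prop :=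
  ∃ u, adj v u ∧ α < wgt s(v, u)

theorem exists_starSeparated_subset (T : Finset (V d)) :
    ∃ S ⊆ T, (S : Set (V d)).Pairwise (fun u v => v - u ∉ starNbhd d) ∧
      T.card ≤ 3 ^ d * S.card := by
  classical
  let R : V d → V d → Prop := fun u v => v - u ∈ starNbhd d
  have : Std.Symm R := ⟨fun u v h => by simpa [R] using neg_mem_starNbhd h⟩
  have : Std.Refl R := ⟨fun u => by simp [R, mem_starNbhd]⟩
  refine T.exists_subset_pairwise_not_rel_card_le (R := R) fun t _ => card_starNbhd (d := d) ▸
    Finset.card_le_card_of_injOn (· - t) (fun v hv => (Finset.mem_filter.1 hv).2) ?_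
  exact fun a _ b _ h => sub_left_injective h

theorem badContour.exists_separated_heavy {α : ℝ} {wgt : Sym2 (V d) → ℝ} {W : Finset (V d)}
    (h : badContour α wgt W) :
    ∃ S ⊆ W, (S : Set (V d)).Pairwise (fun u v => v - u ∉ starNbhd d) ∧
      W.card ≤ 2 * 3 ^ d * S.card ∧ ∀ v ∈ S, HasHeavyEdge α wgt v := by
  classical
  obtain ⟨S, hST, hS, hcard⟩ := exists_starSeparated_subset (W.filter (HasHeavyEdge α wgt))
  have hheavy : (W.card : ℝ) ≤ 2 * ((W.filter (HasHeavyEdge α wgt) : Set (V d)).ncard : ℝ) := by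
    rw [Finset.coe_filter]
    exact h.2.2
  rw [Set.ncard_coe_finset] at hheavy
  refine ⟨S, hST.trans (Finset.filter_subset _ _), hS, ?_,
    fun v hv => (Finset.mem_filter.1 (hST hv)).2⟩
  have : W.card ≤ 2 * (W.filter (HasHeavyEdge α wgt)).card := by exact_mod_cast hheavy
  rw [mul_assoc]
  omega

variable {Ω : Type} [MeasurableSpace Ω] {P : Measure Ω} {μ : Measure ℝ} {w : Ω → Sym2 (V d) → ℝ}

theorem IsIIDWeights.measure_iInter_lt_eq (hiid : IsIIDWeights P μ w) (α : ℝ) {ι : Type*}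
    [Fintype ι] {e : ι → Edge d} (he : e.Injective) :
    P (⋂ i, {ω | α < w ω (e i).1}) = μ (Ioi α) ^ Fintype.card ι := by
  rw [(hiid.2.1.precomp he).meas_iInter (s := fun i => {ω | α < w ω (e i).1})
    fun i => ⟨Ioi α, measurableSet_Ioi, rfl⟩]
  have hmarg : ∀ i, P {ω | α < w ω (e i).1} = μ (Ioi α) := fun i => by
    rw [← hiid.2.2.1 (e i), Measure.map_apply (hiid.1 _) measurableSet_Ioi]
    rfl
  simp [hmarg]

theorem IsIIDWeights.measure_forall_hasHeavyEdge_le (hiid : IsIIDWeights P μ w) (α : ℝ)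
    {S : Finset (V d)} (hS : (S : Set (V d)).Pairwise fun u v => v - u ∉ starNbhd d) :
    P {ω | ∀ v ∈ S, HasHeavyEdge α (w ω) v} ≤ (3 ^ d * μ (Ioi α)) ^ S.card := by
  classical
  -- a heavy edge at each `v ∈ S`, encoded by its offset `f v`
  let ι := {f : S → starNbhd d // ∀ v, adj v.1 (v.1 + f v)}
  let edge (f : ι) (v : S) : Edge d := ⟨s(v.1, v.1 + f.1 v), _, _, f.2 v, rfl⟩
  have hinj (f : ι) : (edge f).Injective := fun v v' h => by
    by_contra hne
    rcases Sym2.eq_iff.1 (congrArg Subtype.val h) with ⟨h1, -⟩ | ⟨-, h2⟩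
    · exact hne (Subtype.ext h1)
    · refine hS v.2 v'.2 (fun h => hne (Subtype.ext h)) ?_
      rw [← h2, add_sub_cancel_left]
      exact (f.1 v).2
  have hcover : {ω | ∀ v ∈ S, HasHeavyEdge α (w ω) v} ⊆
      ⋃ f : ι, ⋂ v, {ω | α < w ω (edge f v).1} := by
    intro ω hω
    choose u hadj hu using fun v : S => hω v.1 v.2
    exact mem_iUnion.2 ⟨⟨fun v => ⟨u v - v, sub_mem_starNbhd_of_adj (hadj v)⟩,
      fun v => by simpa using hadj v⟩, mem_iInter.2 fun v => by simpa [edge] using hu v⟩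
  have hcard : Fintype.card ι ≤ (3 ^ d) ^ S.card := by
    simpa [card_starNbhd] using Fintype.card_subtype_le (α := S → starNbhd d) _
  calc P _ ≤ ∑ f : ι, P (⋂ v, {ω | α < w ω (edge f v).1}) :=
        (measure_mono hcover).trans (measure_iUnion_fintype_le _ _)
    _ = Fintype.card ι * μ (Ioi α) ^ S.card := by
        simp [hiid.measure_iInter_lt_eq α (hinj _)]
    _ ≤ (3 ^ d) ^ S.card * μ (Ioi α) ^ S.card := by gcongr; exact_mod_cast hcard
    _ = (3 ^ d * μ (Ioi α)) ^ S.card := (mul_pow _ _ _).symm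

theorem IsIIDWeights.measure_forall_hasHeavyEdge_le_pow (hiid : IsIIDWeights P μ w) {α : ℝ}
    {η : ℝ≥0∞} (hη : η ≤ 1) (hα : 3 ^ d * μ (Ioi α) ≤ η ^ (2 * 3 ^ d)) {S : Finset (V d)}
    (hS : (S : Set (V d)).Pairwise fun u v => v - u ∉ starNbhd d) {m : ℕ}
    (hm : m ≤ 2 * 3 ^ d * S.card) : P {ω | ∀ v ∈ S, HasHeavyEdge α (w ω) v} ≤ η ^ m :=
  calc P _ ≤ (3 ^ d * μ (Ioi α)) ^ S.card := hiid.measure_forall_hasHeavyEdge_le α hS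
    _ ≤ (η ^ (2 * 3 ^ d)) ^ S.card := by gcongr
    _ = η ^ (2 * 3 ^ d * S.card) := (pow_mul _ _ _).symm
    _ ≤ η ^ m := pow_le_pow_of_le_one (by simp) hη hm

theorem IsIIDWeights.measure_exists_badContour_card_eq_le (hiid : IsIIDWeights P μ w)
    (hd : 1 ≤ d) {α : ℝ} {θ : ℝ≥0∞} (hθ : θ ≤ 1)
    (hα : 3 ^ d * μ (Ioi α) ≤ (θ / (4 * 9 ^ d)) ^ (2 * 3 ^ d)) (m : ℕ) :
    P {ω | ∃ W, badContour α (w ω) W ∧ W.card = m} ≤ θ ^ m := by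
  classical
  set η := θ / (4 * 9 ^ d)
  have hθη : 4 * 9 ^ d * η = θ := ENNReal.mul_div_cancel (by simp) (by finiteness)
  have hη : η ≤ 1 := calc
    η ≤ 4 * 9 ^ d * η :=
      le_mul_of_one_le_left' (one_le_mul (by norm_num) (one_le_pow₀ (by norm_num)))
    _ ≤ 1 := hθη.trans_le hθ
  let separated (W : Finset (V d)) : Finset (Finset (V d)) := W.powerset.filter fun S =>
    (S : Set (V d)).Pairwise (fun u v => v - u ∉ starNbhd d) ∧ m ≤ 2 * 3 ^ d * S.card
  have hsub : {ω | ∃ W, badContour α (w ω) W ∧ W.card = m} ⊆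
      ⋃ W ∈ contourCandidates d m, ⋃ S ∈ separated W, {ω | ∀ v ∈ S, HasHeavyEdge α (w ω) v} := by
    rintro ω ⟨W, hW, rfl⟩
    obtain ⟨S, hSW, hS, hcard, hheavy⟩ := hW.exists_separated_heavy
    simp only [mem_iUnion]
    exact ⟨W, mem_contourCandidates hd hW.1 hW.2.1, S,
      Finset.mem_filter.2 ⟨Finset.mem_powerset.2 hSW, hS, hcard⟩, hheavy⟩
  have hterm : ∀ W, ∀ S ∈ separated W, P {ω | ∀ v ∈ S, HasHeavyEdge α (w ω) v} ≤ η ^ m :=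
    fun W S hS => hiid.measure_forall_hasHeavyEdge_le_pow hη hα (Finset.mem_filter.1 hS).2.1
      (Finset.mem_filter.1 hS).2.2
  calc P _ ≤ ∑ W ∈ contourCandidates d m, ∑ S ∈ separated W,
        P {ω | ∀ v ∈ S, HasHeavyEdge α (w ω) v} :=
        (measure_mono hsub).trans ((measure_biUnion_finset_le _ _).trans
          (Finset.sum_le_sum fun W _ => measure_biUnion_finset_le _ _))
    _ ≤ ∑ W ∈ contourCandidates d m, 2 ^ m * η ^ m := by
        refine Finset.sum_le_sum fun W hW => (Finset.sum_le_card_nsmul _ _ _ (hterm W)).trans ?_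
        have : (separated W).card ≤ 2 ^ m := by
          rw [← (Finset.mem_filter.1 hW).2, ← Finset.card_powerset]
          exact Finset.card_filter_le _ _
        rw [nsmul_eq_mul]
        gcongr
        exact_mod_cast this
    _ ≤ (2 * 9 ^ d) ^ m * (2 ^ m * η ^ m) := by
        rw [Finset.sum_const, nsmul_eq_mul]
        gcongr
        exact_mod_cast card_contourCandidates_le d m
    _ = θ ^ m := by
        rw [← mul_pow, ← mul_pow, ← hθη]; ring_nf

end

theorem bad_contour_bound_general (d : ℕ) (hd : 2 ≤ d)
    {Ω : Type} [MeasurableSpace Ω] (P : Measure Ω)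
    (μ : Measure ℝ) [IsProbabilityMeasure μ] (w : Ω → Sym2 (V d) → ℝ)
    (hiid : IsIIDWeights P μ w) :
    ∃ α₀ : ℝ, ∀ α : ℝ, α₀ ≤ α → ∃ C : ℝ, 0 < C ∧ ∀ n : ℕ, 1 ≤ n →
      P {ω | ∃ W : Finset (V d), badContour α (w ω) W ∧ n ≤ W.card}
        ≤ ENNReal.ofReal (Real.exp (-(C * n))) := by
  set θ : ℝ≥0∞ := 2⁻¹ * ENNReal.ofReal (Real.exp (-1))
  have hθ : θ ≤ 1 :=
    mul_le_one' (by norm_num) (ENNReal.ofReal_le_one.2 (Real.exp_le_one_iff.2 (by norm_num)))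
  have hθ0 : θ ≠ 0 := mul_ne_zero (by simp) (ENNReal.ofReal_pos.2 (Real.exp_pos _)).ne'
  obtain ⟨α₀, hα₀⟩ := exists_forall_ge_mul_measure_Ioi_le μ (c := 3 ^ d)
    (ε := (θ / (4 * 9 ^ d)) ^ (2 * 3 ^ d)) (by finiteness)
    (ENNReal.pow_pos (ENNReal.div_pos hθ0 (by finiteness)) (2 * 3 ^ d))
  refine ⟨α₀, fun α hα => ⟨1, one_pos, fun n hn => ?_⟩⟩
  calc P {ω | ∃ W : Finset (V d), badContour α (w ω) W ∧ n ≤ W.card}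
      ≤ ∑' j, P {ω | ∃ W : Finset (V d), badContour α (w ω) W ∧ W.card = n + j} :=
        (measure_mono (by
          rintro ω ⟨W, hW, hnW⟩
          exact mem_iUnion.2 ⟨W.card - n, W, hW, by omega⟩)).trans (measure_iUnion_le _)
    _ ≤ ENNReal.ofReal (Real.exp (-n)) := ENNReal.tsum_nat_add_le_ofReal_exp_neg
        (hiid.measure_exists_badContour_card_eq_le (by omega) hθ (hα₀ α hα)) hn
    _ = ENNReal.ofReal (Real.exp (-(1 * n))) := by rw [one_mul]

/-- Proposition 3.3: for `α` sufficiently large, the probability that there exists an `α`-bad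
contour of cardinality at least `n` is at most `e^{-Cn}`. -/
theorem bad_contour_bound (d : ℕ) (hd : 2 ≤ d)
    {Ω : Type} [MeasurableSpace Ω] (P : Measure Ω) [IsProbabilityMeasure P]
    (μ : Measure ℝ) [IsProbabilityMeasure μ] (w : Ω → Sym2 (V d) → ℝ)
    (hiid : IsIIDWeights P μ w) :
    ∃ α₀ : ℝ, ∀ α : ℝ, α₀ ≤ α → ∃ C : ℝ, 0 < C ∧ ∀ n : ℕ, 1 ≤ n →
      P {ω | ∃ W : Finset (V d), badContour α (w ω) W ∧ n ≤ W.card}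
        ≤ ENNReal.ofReal (Real.exp (-(C * n))) :=
  bad_contour_bound_general d hd P μ w hiid

end FPPBoundary
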